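/- Let A be a real reduced multiring. Then for all a, b, x, y, z ∈ A: (i) x ∈ ax² + bx² if and only if x ∈ ay² + bz² for some y, z ∈ A; (ii) x ∈ a + b if and only if x ∈ ax² + bx², −a ∈ ba² − xa², and −b ∈ ab² − xb²; (iii) if ax = bx, ay = by and z ∈ xz² + yz², then az = bz; (iv) if x ∈ ax² + bx², then x² ∈ a²x² + b²x². -/

import Mathlib

/-! # Multirings (Marshall) -/

universe u v

/-- A multiring in the sense of Marshall: a commutative monoid under `mul` with a
multivalued addition `add : A → A → Set A`. -/
structure Multiring (A : Type u) where
  add : A → A → Set A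
  mul : A → A → A
  neg : A → A
  zero : A
  one : A
  add_nonempty : ∀ a b : A, (add a b).Nonempty
  add_comm' : ∀ a b : A, add a b = add b a
  add_assoc' : ∀ a b c : A, (⋃ x ∈ add b c, add a x) = ⋃ y ∈ add a b, add y c
  add_zero' : ∀ a : A, add a zero = {a}
  zero_mem_add_neg : ∀ a : A, zero ∈ add a (neg a)
  neg_unique : ∀ a b : A, zero ∈ add a b → b = neg a
  mem_add_reverse : ∀ a b c : A, c ∈ add a b → a ∈ add c (neg b)
  mul_comm' : ∀ a b : A, mul a b = mul b a
  mul_assoc' : ∀ a b c : A, mul (mul a b) c = mul a (mul b c)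
  mul_one' : ∀ a : A, mul a one = a
  mul_zero' : ∀ a : A, mul a zero = zero
  mul_mem_add : ∀ d a b c : A, c ∈ add a b → mul d c ∈ add (mul d a) (mul d b)

namespace Multiring

variable {A : Type u} {B : Type v}

/-- `M.SumSq x` : `x` belongs to some finite multivalued sum of squares of `A`. -/
inductive SumSq (M : Multiring A) : A → Prop
  | sq : ∀ a : A, SumSq M (M.mul a a)
  | step : ∀ a b c : A, SumSq M b → c ∈ M.add (M.mul a a) b → SumSq M c

/-- A real reduced multiring: `−1 ∉ ΣA²`, `a³ = a`, `a + ab² = {a}`, and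
`a² + b²` is a singleton. -/
def IsRealReduced (M : Multiring A) : Prop :=
  ¬ M.SumSq (M.neg M.one) ∧
  (∀ a : A, M.mul a (M.mul a a) = a) ∧
  (∀ a b : A, M.add a (M.mul a (M.mul b b)) = {a}) ∧
  (∀ a b : A, ∃! c : A, c ∈ M.add (M.mul a a) (M.mul b b))

/-- Quadratically tuned multiring: axioms QT0–QT5. -/
def IsQT (M : Multiring A) : Prop :=
  -- QT0
  (∀ a : A, M.mul a (M.mul a a) = a) ∧
  -- QT1
  (∀ a : A, M.one ∈ M.add M.one a) ∧
  -- QT2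
  (∀ a b c d e : A, M.mul a d = M.mul b d → M.mul a e = M.mul b e →
    c ∈ M.add (M.mul (M.mul c c) d) (M.mul (M.mul c c) e) → M.mul a c = M.mul b c) ∧
  -- QT3
  (∀ a b c d e : A,
    e ∈ M.add (M.mul (M.mul (M.mul c e) (M.mul c e)) a)
              (M.mul (M.mul (M.mul d e) (M.mul d e)) b) →
    e ∈ M.add (M.mul (M.mul e e) a) (M.mul (M.mul e e) b)) ∧
  -- QT4
  (∀ a b c : A, a ∈ M.add (M.mul (M.mul a a) b) (M.mul (M.mul a a) c) →
    M.mul a a ∈ M.add (M.mul (M.mul a b) (M.mul a b)) (M.mul (M.mul a c) (M.mul a c))) ∧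
  -- QT5
  (∀ a b e : A, e ∈ M.add a b ↔
    (e ∈ M.add (M.mul a (M.mul e e)) (M.mul b (M.mul e e)) ∧
     M.neg a ∈ M.add (M.mul b (M.mul a a)) (M.neg (M.mul e (M.mul a a))) ∧
     M.neg b ∈ M.add (M.mul a (M.mul b b)) (M.neg (M.mul e (M.mul b b)))))

/-- Morphism of multirings. -/
def IsHom (M : Multiring A) (N : Multiring B) (f : A → B) : Prop :=
  f M.zero = N.zero ∧ f M.one = N.one ∧
  (∀ a : A, f (M.neg a) = N.neg (f a)) ∧
  (∀ a b : A, f (M.mul a b) = N.mul (f a) (f b)) ∧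
  (∀ a b c : A, c ∈ M.add a b → f c ∈ N.add (f a) (f b))

/-- Isomorphism of multirings: a bijective morphism whose inverse is also a morphism. -/
def IsIso (M : Multiring A) (N : Multiring B) (f : A → B) : Prop :=
  IsHom M N f ∧ ∃ g : B → A, IsHom N M g ∧ (∀ a, g (f a) = a) ∧ (∀ b, f (g b) = b)

end Multiring

/-! ## The multifield `Q₂ = {−1,0,1}` (realized on `SignType`) -/

/-- Multivalued addition of `Q₂`: `a+0={a}`, `1+1={1}`, `(−1)+(−1)={−1}`,
`1+(−1)={−1,0,1}`. -/
def Q2add (a b : SignType) : Set SignType :=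
  if a = 0 then {b} else if b = 0 then {a} else if a = b then {a} else Set.univ

namespace Multiring

variable {A : Type u}

/-- A point of the real spectrum: a multiring morphism `σ : A → Q₂`. -/
def IsSperMap (M : Multiring A) (σ : A → SignType) : Prop :=
  σ M.zero = 0 ∧ σ M.one = 1 ∧
  (∀ a : A, σ (M.neg a) = -σ a) ∧
  (∀ a b : A, σ (M.mul a b) = σ a * σ b) ∧
  (∀ a b c : A, c ∈ M.add a b → σ c ∈ Q2add (σ a) (σ b))

/-- `Sper(A)`, the real spectrum of the multiring `A`. -/
def Sper (M : Multiring A) : Type u := {σ : A → SignType // M.IsSperMap σ}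

/-- A preordering of a multiring. -/
def IsPreordering (M : Multiring A) (T : Set A) : Prop :=
  (∀ a ∈ T, ∀ b ∈ T, M.add a b ⊆ T) ∧
  (∀ a ∈ T, ∀ b ∈ T, M.mul a b ∈ T) ∧
  (∀ a : A, M.mul a a ∈ T)

/-- `X_T = {σ ∈ Sper(A) : σ(t) ∈ {0,1} for all t ∈ T}`. -/
def XT (M : Multiring A) (T : Set A) : Type u :=
  {σ : A → SignType // M.IsSperMap σ ∧ ∀ t ∈ T, σ t = 0 ∨ σ t = 1}

/-- The evaluation map `a ↦ ā`, `ā(σ) = σ(a)`, into `Q₂^{X_T}`. -/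
def evalT (M : Multiring A) (T : Set A) (a : A) : XT M T → SignType :=
  fun σ => σ.1 a

/-- The carrier of `Q_T(A)`: the image of `A` in `Q₂^{X_T}`. -/
def QTcar (M : Multiring A) (T : Set A) : Set (XT M T → SignType) :=
  Set.range (evalT M T)

/-- The evaluation map `a ↦ ā` viewed as a map onto `Q_T(A)`. -/
def evalQ (M : Multiring A) (T : Set A) (a : A) : QTcar M T :=
  ⟨evalT M T a, a, rfl⟩

/-- Evaluation `a ↦ â` into `Q₂^{Sper(A)}`. -/
def hat (M : Multiring A) (a : A) : M.Sper → SignType := fun σ => σ.1 a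

end Multiring

/-! ## Abstract real spectra -/

/-- Representation: `D(a,b)` for a set `G` of functions `X → {−1,0,1}`. -/
def Dfun {X : Type u} (G : Set (X → SignType)) (a b : X → SignType) : Set (X → SignType) :=
  {c | c ∈ G ∧ ∀ x : X, 0 < a x * c x ∨ 0 < b x * c x ∨ c x = 0}

/-- Transversal representation `Dᵗ(a,b)`. -/
def Dtfun {X : Type u} (G : Set (X → SignType)) (a b : X → SignType) : Set (X → SignType) :=
  {c | c ∈ G ∧ ∀ x : X, 0 < a x * c x ∨ 0 < b x * c x ∨ (c x = 0 ∧ b x = -a x)}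

/-- An abstract real spectrum (space of signs) on a set `X`. -/
structure ARS (X : Type u) where
  G : Set (X → SignType)
  nonemptyX : Nonempty X
  one_mem : (fun _ => (1 : SignType)) ∈ G
  zero_mem : (fun _ => (0 : SignType)) ∈ G
  negOne_mem : (fun _ => (-1 : SignType)) ∈ G
  mul_mem : ∀ {a b : X → SignType}, a ∈ G → b ∈ G → (fun x => a x * b x) ∈ G
  separates : ∀ x y : X, x ≠ y → ∃ a ∈ G, a x ≠ a y
  ax2 : ∀ P : Set (X → SignType), P ⊆ G → (fun _ => (1 : SignType)) ∈ P →
    (∀ {a b : X → SignType}, a ∈ P → b ∈ P → (fun x => a x * b x) ∈ P) →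
    (∀ a ∈ G, a ∈ P ∨ (fun x => -(a x)) ∈ P) →
    (fun _ => (-1 : SignType)) ∉ P →
    (∀ {a b : X → SignType}, a ∈ P → b ∈ P → Dfun G a b ⊆ P) →
    (∀ {a b : X → SignType}, a ∈ G → b ∈ G →
      (fun x => a x * b x) ∈ P → (fun x => -(a x * b x)) ∈ P →
      (a ∈ P ∧ (fun x => -(a x)) ∈ P) ∨ (b ∈ P ∧ (fun x => -(b x)) ∈ P)) →
    ∃! x : X, P = {a | a ∈ G ∧ a x ≤ 0}
  ax3a : ∀ a b c p q : X → SignType, a ∈ G → b ∈ G → c ∈ G →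
    q ∈ Dfun G b c → p ∈ Dfun G a q → ∃ r ∈ Dfun G a b, p ∈ Dfun G r c
  ax3b : ∀ a b : X → SignType, a ∈ G → b ∈ G → (Dtfun G a b).Nonempty

/-! ## Ternary semigroups, real semigroups and pre-real semigroups -/

/-- The raw data of a ternary structure with a ternary relation `D`
(`D a b c` means `a ∈ D(b,c)`). -/
structure TernaryStruct (G : Type u) where
  mul : G → G → G
  one : G
  zero : G
  negOne : G
  D : G → G → G → Prop

namespace TernaryStruct

variable {G : Type u}

def neg (S : TernaryStruct G) (a : G) : G := S.mul S.negOne a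

/-- Transversal representation: `a ∈ Dᵗ(b,c) ⟺ a ∈ D(b,c) ∧ −b ∈ D(−a,c) ∧ −c ∈ D(b,−a)`. -/
def Dt (S : TernaryStruct G) (a b c : G) : Prop :=
  S.D a b c ∧ S.D (S.neg b) (S.neg a) c ∧ S.D (S.neg c) b (S.neg a)

end TernaryStruct

/-- Axioms of a ternary semigroup together with [RS0]-[RS6] and [RS8]. -/
structure PreRealSemigroupAux (G : Type u) extends TernaryStruct G where
  mul_comm' : ∀ a b : G, mul a b = mul b a
  mul_assoc' : ∀ a b c : G, mul (mul a b) c = mul a (mul b c)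
  mul_one' : ∀ a : G, mul a one = a
  cube : ∀ a : G, mul a (mul a a) = a
  negOne_ne_one : negOne ≠ one
  negOne_mul_negOne : mul negOne negOne = one
  mul_zero' : ∀ a : G, mul a zero = zero
  neg_fix : ∀ a : G, mul negOne a = a → a = zero
  rs0 : ∀ a b c : G, D c a b ↔ D c b a
  rs1 : ∀ a b : G, D a a b
  rs2 : ∀ a b c d : G, D a b c → D (mul a d) (mul b d) (mul c d)
  rs3 : ∀ a b c d e : G, toTernaryStruct.Dt a b c → toTernaryStruct.Dt c d e →
    ∃ x : G, toTernaryStruct.Dt x b d ∧ toTernaryStruct.Dt a x e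
  rs4 : ∀ a b c d e : G, D e (mul (mul c c) a) (mul (mul d d) b) → D e a b
  rs5 : ∀ a b c d e : G, mul a d = mul b d → mul a e = mul b e → D c d e → mul a c = mul b c
  rs6 : ∀ a b c : G, D c a b →
    toTernaryStruct.Dt c (mul (mul c c) a) (mul (mul c c) b)
  rs8 : ∀ a b c : G, D a b c → D (mul a a) (mul b b) (mul c c)

/-- A real semigroup: [RS0]-[RS8]. -/
structure RealSemigroup (G : Type u) extends PreRealSemigroupAux G where
  rs7 : ∀ a b x : G, toTernaryStruct.Dt x a (toTernaryStruct.neg b) →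
    toTernaryStruct.Dt x b (toTernaryStruct.neg a) → a = b

/-- A pre-real semigroup: [RS0]-[RS6], [RS8] and [RS7']. -/
structure PreRealSemigroup (G : Type u) extends PreRealSemigroupAux G where
  rs7' : ∀ x a : G, toTernaryStruct.Dt x zero a ↔ x = a

/-- Morphism of pre-real semigroups: preserves `·`, `1`, `0`, `−1` and `D`. -/
def IsPRSHom {G : Type u} {H : Type v} (S : PreRealSemigroup G) (T : PreRealSemigroup H)
    (f : G → H) : Prop :=
  f S.one = T.one ∧ f S.zero = T.zero ∧ f S.negOne = T.negOne ∧
  (∀ a b : G, f (S.mul a b) = T.mul (f a) (f b)) ∧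
  (∀ a b c : G, S.D a b c → T.D (f a) (f b) (f c))

/-! ## Quadratic forms and isometry -/

/-- Weak isometry of forms (as lists of entries) over a multiring. -/
inductive WeakIsom {A : Type u} (M : Multiring A) : List A → List A → Prop
  | one (a : A) : WeakIsom M [a] [a]
  | two (a b c d : A) : M.mul a b = M.mul c d → (M.add a b ∩ M.add c d).Nonempty →
      WeakIsom M [a, b] [c, d]
  | step (a₁ b₁ x y : A) (as bs zs : List A) :
      2 ≤ as.length → as.length = bs.length → zs.length + 1 = as.length →
      WeakIsom M [a₁, x] [b₁, y] → WeakIsom M as (x :: zs) → WeakIsom M bs (y :: zs) →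
      WeakIsom M (a₁ :: as) (b₁ :: bs)

/-- Strong isometry of forms (as lists of entries) over a multiring. -/
inductive StrongIsom {A : Type u} (M : Multiring A) : List A → List A → Prop
  | one (a : A) : StrongIsom M [a] [a]
  | two (a b c d : A) : M.mul a b = M.mul c d → M.add a b = M.add c d →
      StrongIsom M [a, b] [c, d]
  | step (a₁ b₁ x y : A) (as bs zs : List A) :
      2 ≤ as.length → as.length = bs.length → zs.length + 1 = as.length →
      StrongIsom M [a₁, x] [b₁, y] → StrongIsom M as (x :: zs) → StrongIsom M bs (y :: zs) →
      StrongIsom M (a₁ :: as) (b₁ :: bs)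

/-!
Squares are idempotent, a sum `f + g` of two idempotents is a single point, and `a` absorbs every
multiple `a b²` of itself. The central lemma is `mem_add_sq_of_mem_add_neg`: if `t E = t` and
`t ∈ E − F` with `F` idempotent, then `E ∈ F + t²`. It shows that elements of `u − u` are supported
on `u²` (`w u² = w`), and so are the elements of `C + D` whenever `D` is supported on `C²`. This
gives `e ∈ m² + n²` whenever an idempotent `e ∈ m + n` acts as the identity on `m` and `n`, which is
(iv) after multiplying by `x`; and (iii) follows from (iv) because `c f + c g` has at most one
element for idempotents `f, g`. For (i) and the converse in (ii) the extra summands are absorbed,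
using `x ∈ x + x c`, a consequence of `1 ∈ 1 + c`.
-/

namespace Multiring

variable {A : Type u} (M : Multiring A)

instance : Std.Associative M.mul := ⟨M.mul_assoc'⟩

instance : Std.Commutative M.mul := ⟨M.mul_comm'⟩

theorem mul_left_comm' (a b c : A) : M.mul a (M.mul b c) = M.mul b (M.mul a c) := by
  ac_rfl

theorem one_mul' (a : A) : M.mul M.one a = a := by
  rw [M.mul_comm', M.mul_one']

variable {M}

theorem mem_add_comm {a b c : A} (h : c ∈ M.add a b) : c ∈ M.add b a := by
  rwa [M.add_comm']

theorem neg_neg (a : A) : M.neg (M.neg a) = a :=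
  (M.neg_unique _ _ (mem_add_comm (M.zero_mem_add_neg a))).symm

theorem mul_neg (a b : A) : M.mul a (M.neg b) = M.neg (M.mul a b) := by
  have h := M.mul_mem_add a b (M.neg b) M.zero (M.zero_mem_add_neg b)
  rw [M.mul_zero'] at h
  exact M.neg_unique _ _ h

theorem neg_mem_add_neg {a b c : A} (h : c ∈ M.add a b) :
    M.neg c ∈ M.add (M.neg a) (M.neg b) := by
  simpa only [M.mul_comm' (M.neg M.one), M.mul_neg, M.mul_one'] using
    M.mul_mem_add (M.neg M.one) a b c h

theorem mem_add_of_mem_add_neg {a b c : A} (h : c ∈ M.add a (M.neg b)) : a ∈ M.add c b := by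
  simpa only [M.neg_neg] using M.mem_add_reverse a (M.neg b) c h

theorem exists_mem_add_of_mem_add {a b c x y : A} (hy : y ∈ M.add b c) (hx : x ∈ M.add a y) :
    ∃ w ∈ M.add a b, x ∈ M.add w c := by
  have h : x ∈ ⋃ t ∈ M.add b c, M.add a t := Set.mem_biUnion hy hx
  simpa [M.add_assoc'] using h

theorem mem_add_of_add_eq_singleton {a b c w x y : A} (hab : M.add a b = {w})
    (hy : y ∈ M.add b c) (hx : x ∈ M.add a y) : x ∈ M.add w c := by
  obtain ⟨w', hw', hx'⟩ := exists_mem_add_of_mem_add hy hx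
  rw [hab, Set.mem_singleton_iff] at hw'
  exact hw' ▸ hx'

structure IsReduced (M : Multiring A) : Prop where
  mul_cube : ∀ a : A, M.mul a (M.mul a a) = a
  add_mul_sq : ∀ a b : A, M.add a (M.mul a (M.mul b b)) = {a}
  existsUnique_mem_add_sq : ∀ a b : A, ∃! c : A, c ∈ M.add (M.mul a a) (M.mul b b)

theorem IsRealReduced.isReduced (h : M.IsRealReduced) : M.IsReduced :=
  ⟨h.2.1, h.2.2.1, h.2.2.2⟩

namespace IsReduced

variable (hM : M.IsReduced)
include hM

theorem mul_cube_left (a b : A) : M.mul a (M.mul a (M.mul a b)) = M.mul a b := by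
  rw [← M.mul_assoc' a, ← M.mul_assoc', M.mul_assoc' a a a, hM.mul_cube]

theorem sq_idem (a : A) : M.mul (M.mul a a) (M.mul a a) = M.mul a a := by
  rw [M.mul_assoc', hM.mul_cube_left]

theorem sq_mul_sq_idem (a b : A) :
    M.mul (M.mul (M.mul a a) (M.mul b b)) (M.mul (M.mul a a) (M.mul b b))
      = M.mul (M.mul a a) (M.mul b b) := by
  rw [show M.mul (M.mul (M.mul a a) (M.mul b b)) (M.mul (M.mul a a) (M.mul b b))
    = M.mul (M.mul (M.mul a a) (M.mul a a)) (M.mul (M.mul b b) (M.mul b b)) by ac_rfl,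
    hM.sq_idem, hM.sq_idem]

theorem add_self (a : A) : M.add a a = {a} := by
  simpa only [M.mul_one'] using hM.add_mul_sq a M.one

theorem exists_add_idem_eq_singleton {f g : A} (hf : M.mul f f = f) (hg : M.mul g g = g) :
    ∃ J, M.add f g = {J} := by
  obtain ⟨J, hJ, huniq⟩ := hM.existsUnique_mem_add_sq f g
  rw [hf, hg] at hJ huniq
  exact ⟨J, Set.eq_singleton_iff_unique_mem.mpr ⟨hJ, huniq⟩⟩

theorem eq_of_mem_add_idem {f g c d : A} (hf : M.mul f f = f) (hg : M.mul g g = g)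
    (hc : c ∈ M.add f g) (hd : d ∈ M.add f g) : c = d := by
  obtain ⟨J, hJ⟩ := hM.exists_add_idem_eq_singleton hf hg
  rw [hJ] at hc hd
  exact hc.trans hd.symm

theorem mul_eq_right_of_mem_add_idem {f g J : A} (hf : M.mul f f = f) (hg : M.mul g g = g)
    (hJ : J ∈ M.add f g) : M.mul J f = f := by
  have h := M.mul_mem_add f f g J hJ
  rwa [hf, ← hg, hM.add_mul_sq, Set.mem_singleton_iff, M.mul_comm'] at h

theorem mul_eq_self_of_mem_add_idem {f g J c : A} (hf : M.mul f f = f) (hg : M.mul g g = g)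
    (hJ : J ∈ M.add f g) (hcf : M.mul c f = f) (hcg : M.mul c g = g) : M.mul c J = J := by
  have h := M.mul_mem_add c f g J hJ
  rw [hcf, hcg] at h
  exact hM.eq_of_mem_add_idem hf hg h hJ

theorem mem_add_sq_of_mem_add_neg {E F t : A} (hF : M.mul F F = F) (htE : M.mul t E = t)
    (ht : t ∈ M.add E (M.neg F)) : E ∈ M.add F (M.mul t t) := by
  have hEt : E ∈ M.add t F := mem_add_of_mem_add_neg ht
  have htt : t ∈ M.add (M.mul t t) (M.neg (M.mul F (M.mul t t))) := by
    have h := M.mul_mem_add (M.mul t t) t F E hEt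
    rw [M.mul_comm' _ t, hM.mul_cube, M.mul_comm' _ F, M.mul_assoc' t t E, htE] at h
    exact M.mem_add_reverse _ _ _ h
  obtain ⟨J, hJ⟩ := hM.exists_add_idem_eq_singleton hF (hM.sq_idem t)
  -- `E ∈ J − F t²`, and `E` absorbs `F t²`, so the single point `J` of `F + t²` is `E`
  have hJE : J ∈ M.add E (M.mul F (M.mul t t)) :=
    mem_add_of_mem_add_neg (mem_add_of_add_eq_singleton hJ htt (mem_add_comm hEt))
  have hFt : M.mul E (M.mul (M.mul F t) (M.mul F t)) = M.mul F (M.mul t t) := by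
    rw [show M.mul E (M.mul (M.mul F t) (M.mul F t)) = M.mul (M.mul F F) (M.mul t (M.mul t E))
      by ac_rfl, hF, htE]
  rw [← hFt, hM.add_mul_sq, Set.mem_singleton_iff] at hJE
  rw [hJ, hJE]
  rfl

theorem eq_sq_of_mem_add_neg_self {f v : A} (hfv : M.mul f v = v)
    (hmem : f ∈ M.add v (M.neg v)) : f = M.mul v v := by
  have hv : M.neg v ∈ M.add (M.mul v v) (M.neg (M.mul v v)) := by
    have h := M.neg_mem_add_neg (M.mul_mem_add v v (M.neg v) f hmem)
    rw [M.mul_neg, M.mul_comm' v f, hfv, M.neg_neg] at h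
    exact mem_add_comm h
  obtain ⟨α, hα, hfα⟩ := exists_mem_add_of_mem_add hv hmem
  have hfvv : M.add f (M.mul v v) = {f} := by
    simpa only [← M.mul_assoc', hfv] using hM.add_mul_sq f v
  have hαf : α ∈ M.add f (M.mul v v) := mem_add_of_mem_add_neg hfα
  rw [hfvv, Set.mem_singleton_iff] at hαf
  rw [hαf] at hα
  have h := hM.mem_add_sq_of_mem_add_neg (hM.sq_idem v) (by rw [M.mul_comm', hfv])
    (M.mem_add_reverse _ _ _ hα)
  rwa [hM.add_self, Set.mem_singleton_iff] at h

theorem mul_sq_of_mem_add_neg_self {u w : A} (hw : w ∈ M.add u (M.neg u)) :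
    M.mul w (M.mul u u) = w := by
  have h := M.mem_add_reverse _ _ _ (M.mul_mem_add w w u u (mem_add_of_mem_add_neg hw))
  have hsq : M.mul w w = M.mul (M.mul w u) (M.mul w u) :=
    hM.eq_sq_of_mem_add_neg_self (by rw [M.mul_assoc', hM.mul_cube_left]) h
  calc M.mul w (M.mul u u) = M.mul w (M.mul (M.mul w u) (M.mul w u)) := by
        simp only [M.mul_assoc', M.mul_comm', M.mul_left_comm', hM.mul_cube]
    _ = w := by rw [← hsq, hM.mul_cube]

theorem mul_sq_of_mem_add {z C D : A} (hz : z ∈ M.add C D) (hD : M.mul D (M.mul C C) = D) :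
    M.mul z (M.mul C C) = z := by
  have h1 : M.mul z z ∈ M.add (M.mul z C) (M.mul z D) := M.mul_mem_add z C D z hz
  have h2 : M.mul z C ∈ M.add (M.mul (M.mul z z) (M.mul C C)) (M.neg (M.mul z D)) := by
    have h := M.mul_mem_add (M.mul z (M.mul C C)) C D z hz
    rw [show M.mul (M.mul z (M.mul C C)) z = M.mul (M.mul z z) (M.mul C C) by ac_rfl,
      show M.mul (M.mul z (M.mul C C)) C = M.mul z (M.mul C (M.mul C C)) by ac_rfl,
      M.mul_assoc', M.mul_comm' (M.mul C C), hD, hM.mul_cube] at h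
    exact M.mem_add_reverse _ _ _ h
  obtain ⟨w, hw, hzz⟩ := exists_mem_add_of_mem_add (mem_add_comm h2) (mem_add_comm h1)
  have hwD := hM.mul_sq_of_mem_add_neg_self hw
  have hwz : M.mul w (M.mul z z) = w := by
    rw [← hwD]
    simp only [M.mul_assoc', M.mul_comm', M.mul_left_comm', hM.mul_cube_left]
  have hwC : M.mul w (M.mul C C) = w := by
    rw [← hwD, show M.mul (M.mul w (M.mul (M.mul z D) (M.mul z D))) (M.mul C C)
      = M.mul w (M.mul (M.mul z (M.mul D (M.mul C C))) (M.mul z D)) by ac_rfl, hD]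
  have hzzC : M.mul (M.mul z z) (M.mul C C) = M.mul z z := by
    have h := hM.mem_add_sq_of_mem_add_neg (hM.sq_mul_sq_idem z C) hwz (M.mem_add_reverse _ _ _ hzz)
    have hww : M.mul (M.mul (M.mul z z) (M.mul C C)) (M.mul w w) = M.mul w w := by
      rw [show M.mul (M.mul (M.mul z z) (M.mul C C)) (M.mul w w)
        = M.mul (M.mul w (M.mul z z)) (M.mul w (M.mul C C)) by ac_rfl, hwz, hwC]
    have hsing := hM.add_mul_sq (M.mul (M.mul z z) (M.mul C C)) w
    rw [hww] at hsing
    rw [hsing, Set.mem_singleton_iff] at h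
    exact h.symm
  rw [← hM.mul_cube z, M.mul_assoc', hzzC]

theorem mem_add_sq_of_mem_add {e m n : A} (he : M.mul e e = e) (hem : M.mul e m = m)
    (hen : M.mul e n = n) (hmem : e ∈ M.add m n) : e ∈ M.add (M.mul m m) (M.mul n n) := by
  have hn : n ∈ M.add (M.mul m n) (M.mul n n) := by
    simpa only [M.mul_comm' n, hen] using M.mul_mem_add n m n e hmem
  obtain ⟨y, hy, hey⟩ := exists_mem_add_of_mem_add hn hmem
  have hym : M.mul y (M.mul m m) = y := hM.mul_sq_of_mem_add hy (by
    rw [show M.mul (M.mul m n) (M.mul m m) = M.mul (M.mul m (M.mul m m)) n by ac_rfl,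
      hM.mul_cube])
  have hnn : M.mul e (M.mul n n) = M.mul n n := by rw [← M.mul_assoc', hen]
  have hey' : M.mul e y ∈ M.add e (M.neg (M.mul n n)) := by
    simpa only [he, M.mul_neg, hnn] using
      M.mul_mem_add e e (M.neg (M.mul n n)) y (M.mem_add_reverse _ _ _ hey)
  have he' : e ∈ M.add (M.mul n n) (M.mul (M.mul e y) (M.mul e y)) :=
    hM.mem_add_sq_of_mem_add_neg (hM.sq_idem n)
      (by rw [M.mul_assoc', M.mul_comm' y, ← M.mul_assoc', he]) hey'
  obtain ⟨J, hJ, -⟩ := hM.existsUnique_mem_add_sq m n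
  have hJe : M.mul J e = e := by
    have hJn := hM.mul_eq_right_of_mem_add_idem (hM.sq_idem n) (hM.sq_idem m) (mem_add_comm hJ)
    have hJm := hM.mul_eq_right_of_mem_add_idem (hM.sq_idem m) (hM.sq_idem n) hJ
    have ht : M.mul (M.mul e y) (M.mul m m) = M.mul e y := by rw [M.mul_assoc', hym]
    refine hM.mul_eq_self_of_mem_add_idem (hM.sq_idem n) (hM.sq_idem _) he' hJn ?_
    calc M.mul J (M.mul (M.mul e y) (M.mul e y))
        = M.mul J (M.mul (M.mul (M.mul e y) (M.mul m m)) (M.mul e y)) := by rw [ht]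
      _ = M.mul (M.mul J (M.mul m m)) (M.mul (M.mul e y) (M.mul e y)) := by ac_rfl
      _ = M.mul (M.mul (M.mul e y) (M.mul m m)) (M.mul e y) := by rw [hJm]; ac_rfl
      _ = M.mul (M.mul e y) (M.mul e y) := by rw [ht]
  have heJ : M.mul e J = J :=
    hM.mul_eq_self_of_mem_add_idem (hM.sq_idem m) (hM.sq_idem n) hJ
      (by rw [← M.mul_assoc', hem]) hnn
  rwa [← hJe, M.mul_comm' J, heJ]

theorem eq_of_mem_add_mul_idem {c f g w w' : A} (hf : M.mul f f = f) (hg : M.mul g g = g)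
    (hw : w ∈ M.add (M.mul c f) (M.mul c g)) (hw' : w' ∈ M.add (M.mul c f) (M.mul c g)) :
    w = w' := by
  obtain ⟨J, hJ, -⟩ := hM.existsUnique_mem_add_sq f g
  rw [hf, hg] at hJ
  have hJf := hM.mul_eq_right_of_mem_add_idem hf hg hJ
  have hJg := hM.mul_eq_right_of_mem_add_idem hg hf (mem_add_comm hJ)
  have hJJ : M.mul J J = J := hM.mul_eq_self_of_mem_add_idem hf hg hJ hJf hJg
  have hcc : ∀ {e : A}, M.mul e e = e →
      M.mul (M.mul (M.mul c c) e) (M.mul (M.mul c c) e) = M.mul (M.mul c c) e := by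
    intro e he
    rw [show M.mul (M.mul (M.mul c c) e) (M.mul (M.mul c c) e)
      = M.mul (M.mul (M.mul c c) (M.mul c c)) (M.mul e e) by ac_rfl, hM.sq_idem, he]
  have hccJ := M.mul_mem_add (M.mul c c) f g J hJ
  suffices key : ∀ u ∈ M.add (M.mul c f) (M.mul c g), u = M.mul c J from
    (key w hw).trans (key w' hw').symm
  intro u hu
  have hcu : M.mul c u = M.mul (M.mul c c) J := by
    refine hM.eq_of_mem_add_idem (hcc hf) (hcc hg) ?_ hccJ
    simpa only [← M.mul_assoc'] using M.mul_mem_add c _ _ u hu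
  have huu : M.mul u u = M.mul (M.mul c c) J := by
    refine hM.eq_of_mem_add_idem (hcc hf) (hcc hg) ?_ hccJ
    have h := M.mul_mem_add u _ _ u hu
    have hud : ∀ d, M.mul u (M.mul c d) = M.mul (M.mul c c) (M.mul J d) := by
      intro d
      rw [← M.mul_assoc', M.mul_comm' u c, hcu, M.mul_assoc']
    rwa [hud, hud, hJf, hJg] at h
  calc u = M.mul u (M.mul u u) := (hM.mul_cube u).symm
    _ = M.mul (M.mul c u) (M.mul c J) := by rw [huu]; ac_rfl
    _ = M.mul (M.mul c (M.mul c c)) (M.mul J J) := by rw [hcu]; ac_rfl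
    _ = M.mul c J := by rw [hM.mul_cube, hJJ]

theorem one_mem_add_one (c : A) : M.one ∈ M.add M.one c := by
  obtain ⟨t, ht⟩ := M.add_nonempty M.one c
  have h1 : M.one ∈ M.add t (M.neg c) := M.mem_add_reverse _ _ _ ht
  have ht' : t ∈ M.add (M.mul t t) (M.neg (M.mul c t)) := by
    simpa only [M.mul_one', M.mul_neg, M.mul_comm' t c] using
      M.mul_mem_add t t (M.neg c) M.one h1
  obtain ⟨w, hw, h1w⟩ := exists_mem_add_of_mem_add ht' (mem_add_comm h1)
  have hct : M.mul c t ∈ M.add (M.mul c c) c := by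
    simpa only [M.mul_one'] using mem_add_comm (M.mul_mem_add c M.one c t ht)
  have hwc : w ∈ M.add M.one c :=
    mem_add_of_add_eq_singleton (by simpa only [M.one_mul'] using hM.add_mul_sq M.one c) hct
      (mem_add_of_mem_add_neg h1w)
  have htt : M.mul t t ∈ M.add c M.one :=
    mem_add_of_add_eq_singleton (hM.add_self c) (mem_add_comm hwc)
      (mem_add_comm (mem_add_of_mem_add_neg (mem_add_comm hw)))
  have h1t : M.one ∈ M.add M.one (M.mul t t) := by
    rw [← M.one_mul' (M.mul t t), hM.add_mul_sq]
    rfl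
  exact mem_add_of_add_eq_singleton (hM.add_self M.one) (mem_add_comm htt) h1t

theorem mem_add_mul (x c : A) : x ∈ M.add x (M.mul x c) := by
  simpa only [M.mul_one'] using M.mul_mem_add x _ _ _ (hM.one_mem_add_one c)

theorem mem_add_mul_sq_self_of_mem_add_mul_sq {a b u v x : A}
    (hx : x ∈ M.add (M.mul a (M.mul u u)) (M.mul b (M.mul v v))) :
    x ∈ M.add (M.mul a (M.mul x x)) (M.mul b (M.mul x x)) := by
  have hxx : ∀ c d, M.mul (M.mul x x) (M.mul c (M.mul d d))
      = M.mul (M.mul c (M.mul x x)) (M.mul d d) := fun c d => by ac_rfl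
  have hx' : x ∈ M.add (M.mul (M.mul a (M.mul x x)) (M.mul u u))
      (M.mul (M.mul b (M.mul x x)) (M.mul v v)) := by
    simpa only [M.mul_comm' _ x, hM.mul_cube, hxx] using M.mul_mem_add (M.mul x x) _ _ x hx
  obtain ⟨s, hs⟩ := M.add_nonempty (M.mul a (M.mul x x)) (M.mul b (M.mul x x))
  have hxs : M.mul (M.mul x x) s ∈ M.add (M.mul a (M.mul x x)) (M.mul b (M.mul x x)) := by
    have hxxc : ∀ c, M.mul (M.mul x x) (M.mul c (M.mul x x)) = M.mul c (M.mul x x) :=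
      fun c => by rw [M.mul_left_comm', hM.sq_idem]
    simpa only [hxxc] using M.mul_mem_add (M.mul x x) _ _ s hs
  -- `x` absorbs `x² s ∈ a x² + b x²`; then `a x²` absorbs `a x² u²` and `b x²` absorbs `b x² v²`
  obtain ⟨w, hw, hxw⟩ := exists_mem_add_of_mem_add hxs
    (by simpa only [M.mul_assoc'] using hM.mem_add_mul x (M.mul x s))
  have hw' := mem_add_of_add_eq_singleton (hM.add_mul_sq _ u) hx' (mem_add_comm hw)
  exact mem_add_comm
    (mem_add_of_add_eq_singleton (hM.add_mul_sq _ v) (mem_add_comm hw') (mem_add_comm hxw))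

theorem mem_add_mul_sq_self_iff {a b x : A} :
    x ∈ M.add (M.mul a (M.mul x x)) (M.mul b (M.mul x x)) ↔
      ∃ u v : A, x ∈ M.add (M.mul a (M.mul u u)) (M.mul b (M.mul v v)) :=
  ⟨fun hx => ⟨x, x, hx⟩, fun ⟨_, _, hx⟩ => hM.mem_add_mul_sq_self_of_mem_add_mul_sq hx⟩

theorem sq_mem_add_of_mem_add_mul_sq_self {a b x : A}
    (hx : x ∈ M.add (M.mul a (M.mul x x)) (M.mul b (M.mul x x))) :
    M.mul x x ∈ M.add (M.mul (M.mul a a) (M.mul x x)) (M.mul (M.mul b b) (M.mul x x)) := by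
  have hxc : ∀ c, M.mul x (M.mul c (M.mul x x)) = M.mul c x := fun c => by
    rw [M.mul_left_comm', hM.mul_cube]
  have hxxc : ∀ c, M.mul (M.mul x x) (M.mul c x) = M.mul c x := fun c => by
    rw [M.mul_left_comm', M.mul_comm' _ x, hM.mul_cube]
  have h := hM.mem_add_sq_of_mem_add (hM.sq_idem x) (hxxc a) (hxxc b)
    (by simpa only [hxc] using M.mul_mem_add x _ _ x hx)
  simpa only [show ∀ c, M.mul (M.mul c x) (M.mul c x) = M.mul (M.mul c c) (M.mul x x)
    from fun c => by ac_rfl] using h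

theorem mul_eq_mul_of_mem_add_mul_sq_self {a b x y z : A} (hx : M.mul a x = M.mul b x)
    (hy : M.mul a y = M.mul b y) (hz : z ∈ M.add (M.mul x (M.mul z z)) (M.mul y (M.mul z z))) :
    M.mul a z = M.mul b z := by
  have hzz := hM.sq_mem_add_of_mem_add_mul_sq_self hz
  have hcd : ∀ c d, M.mul (M.mul c z) (M.mul (M.mul d d) (M.mul z z))
      = M.mul (M.mul c d) (M.mul d z) := fun c d => by
    rw [show M.mul (M.mul c z) (M.mul (M.mul d d) (M.mul z z))
      = M.mul (M.mul c d) (M.mul d (M.mul z (M.mul z z))) by ac_rfl, hM.mul_cube]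
  have hcz : ∀ c, M.mul (M.mul c z) (M.mul z z) = M.mul c z := fun c => by
    rw [M.mul_assoc', hM.mul_cube]
  have ha := M.mul_mem_add (M.mul a z) _ _ _ hzz
  rw [hcz, hcd, hcd, hx, hy, ← hcd b x, ← hcd b y] at ha
  have hb := M.mul_mem_add (M.mul b z) _ _ _ hzz
  rw [hcz] at hb
  exact hM.eq_of_mem_add_mul_idem (hM.sq_mul_sq_idem x z) (hM.sq_mul_sq_idem y z) ha hb

theorem mem_add_mul_sq_self_of_mem_add {a b x : A} (hx : x ∈ M.add a b) :
    x ∈ M.add (M.mul a (M.mul x x)) (M.mul b (M.mul x x)) := by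
  simpa only [M.mul_comm' (M.mul x x), hM.mul_cube] using M.mul_mem_add (M.mul x x) a b x hx

theorem neg_mem_add_of_mem_add {a b x : A} (hx : x ∈ M.add a b) :
    M.neg a ∈ M.add (M.mul b (M.mul a a)) (M.neg (M.mul x (M.mul a a))) := by
  have h := M.mul_mem_add (M.mul a a) x (M.neg b) a (M.mem_add_reverse a b x hx)
  rw [M.mul_comm' (M.mul a a) a, hM.mul_cube, M.mul_comm' (M.mul a a) x, M.mul_neg,
    M.mul_comm' (M.mul a a) b] at h
  simpa only [M.neg_neg] using mem_add_comm (M.neg_mem_add_neg h)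

theorem mem_add_of_mem_add_mul_sq_self_of_neg_mem_add {a b x : A}
    (h1 : x ∈ M.add (M.mul a (M.mul x x)) (M.mul b (M.mul x x)))
    (h2 : M.neg a ∈ M.add (M.mul b (M.mul a a)) (M.neg (M.mul x (M.mul a a))))
    (h3 : M.neg b ∈ M.add (M.mul a (M.mul b b)) (M.neg (M.mul x (M.mul b b)))) :
    x ∈ M.add a b := by
  have hxa : M.mul x (M.mul a a) ∈ M.add a (M.mul b (M.mul a a)) := by
    simpa only [M.neg_neg] using M.neg_mem_add_neg (M.mem_add_reverse _ _ _ (mem_add_comm h2))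
  have hxb : M.mul x (M.mul b b) ∈ M.add b (M.mul a (M.mul b b)) := by
    simpa only [M.neg_neg] using M.neg_mem_add_neg (M.mem_add_reverse _ _ _ (mem_add_comm h3))
  obtain ⟨σ, hσ, -⟩ := hM.existsUnique_mem_add_sq a b
  have hxσ : M.mul x σ = x := by
    have hσa := hM.mul_eq_right_of_mem_add_idem (hM.sq_idem a) (hM.sq_idem b) hσ
    have hσb := hM.mul_eq_right_of_mem_add_idem (hM.sq_idem b) (hM.sq_idem a) (mem_add_comm hσ)
    have hσx : M.mul σ (M.mul x x) = M.mul x x :=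
      hM.mul_eq_self_of_mem_add_idem (hM.sq_mul_sq_idem a x) (hM.sq_mul_sq_idem b x)
        (hM.sq_mem_add_of_mem_add_mul_sq_self h1) (by rw [← M.mul_assoc', hσa])
        (by rw [← M.mul_assoc', hσb])
    calc M.mul x σ = M.mul (M.mul x (M.mul x x)) σ := by rw [hM.mul_cube]
      _ = M.mul x (M.mul σ (M.mul x x)) := by ac_rfl
      _ = x := by rw [hσx, hM.mul_cube]
  have hx : x ∈ M.add (M.mul x (M.mul a a)) (M.mul x (M.mul b b)) := by
    simpa only [hxσ] using M.mul_mem_add x _ _ σ hσ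
  obtain ⟨α, hα, hxα⟩ := exists_mem_add_of_mem_add hxa (mem_add_comm hx)
  have hαab := mem_add_of_add_eq_singleton (hM.add_mul_sq a b) (mem_add_comm hxb)
    (mem_add_comm hα)
  exact mem_add_comm (mem_add_of_add_eq_singleton (by rw [M.add_comm']; exact hM.add_mul_sq b a)
    (mem_add_comm hαab) (mem_add_comm hxα))

theorem mem_add_iff {a b x : A} :
    x ∈ M.add a b ↔
      (x ∈ M.add (M.mul a (M.mul x x)) (M.mul b (M.mul x x)) ∧
       M.neg a ∈ M.add (M.mul b (M.mul a a)) (M.neg (M.mul x (M.mul a a))) ∧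
       M.neg b ∈ M.add (M.mul a (M.mul b b)) (M.neg (M.mul x (M.mul b b)))) :=
  ⟨fun hx => ⟨hM.mem_add_mul_sq_self_of_mem_add hx, hM.neg_mem_add_of_mem_add hx,
      hM.neg_mem_add_of_mem_add (mem_add_comm hx)⟩,
    fun ⟨h1, h2, h3⟩ => hM.mem_add_of_mem_add_mul_sq_self_of_neg_mem_add h1 h2 h3⟩

end IsReduced

end Multiring

/-- In a real reduced multiring:
(i) `x ∈ ax² + bx²` iff `x ∈ ay² + bz²` for some `y, z`;
(ii) `x ∈ a + b` iff `x ∈ ax² + bx²`, `−a ∈ ba² − xa²` and `−b ∈ ab² − xb²`;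
(iii) `ax = bx`, `ay = by` and `z ∈ xz² + yz²` imply `az = bz`;
(iv) `x ∈ ax² + bx²` implies `x² ∈ a²x² + b²x²`. -/
theorem statement_4 {A : Type u} (M : Multiring A) (h : M.IsRealReduced)
    (a b x y z : A) :
    (x ∈ M.add (M.mul a (M.mul x x)) (M.mul b (M.mul x x)) ↔
      ∃ u v : A, x ∈ M.add (M.mul a (M.mul u u)) (M.mul b (M.mul v v))) ∧
    (x ∈ M.add a b ↔
      (x ∈ M.add (M.mul a (M.mul x x)) (M.mul b (M.mul x x)) ∧
       M.neg a ∈ M.add (M.mul b (M.mul a a)) (M.neg (M.mul x (M.mul a a))) ∧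
       M.neg b ∈ M.add (M.mul a (M.mul b b)) (M.neg (M.mul x (M.mul b b))))) ∧
    (M.mul a x = M.mul b x → M.mul a y = M.mul b y →
      z ∈ M.add (M.mul x (M.mul z z)) (M.mul y (M.mul z z)) → M.mul a z = M.mul b z) ∧
    (x ∈ M.add (M.mul a (M.mul x x)) (M.mul b (M.mul x x)) →
      M.mul x x ∈ M.add (M.mul (M.mul a a) (M.mul x x)) (M.mul (M.mul b b) (M.mul x x))) :=
  have hM := h.isReduced
  ⟨hM.mem_add_mul_sq_self_iff, hM.mem_add_iff, hM.mul_eq_mul_of_mem_add_mul_sq_self,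
    hM.sq_mem_add_of_mem_add_mul_sq_self⟩
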